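/- arXiv:1409.0463 — 2 statements merged into one kernel-verified Lean document; each statement's English description precedes it below -/
import Mathlib

section
/- Let $(X, \mathcal{F}, \mu, T)$ be a measure-preserving system with $T$ invertible, and let $a$ and $b$ be distinct integers. Let $f_1, f_2 \in L^\infty(\mu)$. Suppose there exist sequences $(f_1^i)_i$ and $(f_2^i)_i$ in $L^\infty(\mu)$ and a constant $M > 0$ such that: $\|f_1^i\|_{L^\infty(\mu)} < M$ for every $i$; $f_j^i \to f_j$ in $L^2(\mu)$ as $i \to \infty$ for each $j = 1, 2$; and for each $i$ there is a set $X_i \subseteq X$ of full $\mu$-measure such that for every $x \in X_i$, every positive integer $k$, and every polynomial $p$ of degree at most $k$ with real coefficients, the averages $\frac{1}{N} \sum_{n=1}^{N} f_1^i(T^{an}x) f_2^i(T^{bn}x) e^{2\pi i p(n)}$ converge as $N \to \infty$. Then there exists a set $X_\infty \subseteq X$ of full $\mu$-measure such that for every $x \in X_\infty$ and every polynomial $p$ with real coefficients, the averages $\frac{1}{N} \sum_{n=1}^{N} f_1(T^{an}x) f_2(T^{bn}x) e^{2\pi i p(n)}$ converge as $N \to \infty$. -/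
/-!
Write `u N` for the averages of `f₁, f₂` and `vᵢ N` for those of `f₁ⁱ, f₂ⁱ`. Since `|f₁ⁱ| ≤ M`
and `|f₂| ≤ B` a.e., along a.e. orbit
`‖u N - vᵢ N‖ ≤ B · A_N |f₁ - f₁ⁱ| + M · A_N |f₂ - f₂ⁱ|`, where `A_N` are the ergodic averages
along `T^a` resp. `T^b`, uniformly in the polynomial `p`. Passing to a subsequence with
`‖fⱼ - fⱼⁱ‖₂ ≤ 4⁻ᵐ`, the maximal ergodic inequality (via Garsia's lemma) bounds the measure of
`{sup_N A_N |fⱼ - fⱼⁱ| > 2⁻ᵐ}` by `2⁻ᵐ`, so by Borel–Cantelli a.e. `x` eventually lies outside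
these sets. At such `x` the averages `u` are a uniform limit of convergent sequences, hence
converge.
-/

open MeasureTheory Filter Finset

/-- The `m`-th power (for `m : ℤ`) of an invertible transformation, applied to a point. -/
def iterZ {X : Type*} (T : X ≃ X) (m : ℤ) : X → X := fun x => (T ^ m) x

/-- `e(α) = exp(2πiα)`. -/
noncomputable def e (α : ℝ) : ℂ := Complex.exp (2 * Real.pi * Complex.I * α)

/-- The polynomial Wiener–Wintner double recurrence average
`(1/N) ∑_{n=1}^N g₁(T^{an} x) g₂(T^{bn} x) e(p(n))`. -/
noncomputable def wAvg {X : Type*} (T : X ≃ X) (a b : ℤ) (g₁ g₂ : X → ℝ) (x : X)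
    (p : Polynomial ℝ) (N : ℕ) : ℂ :=
  (N : ℂ)⁻¹ * ∑ n ∈ Finset.Icc 1 N,
    (g₁ (iterZ T (a * n) x) : ℂ) * (g₂ (iterZ T (b * n) x) : ℂ) * e (p.eval (n : ℝ))

lemma TendstoUniformly.cauchySeq {E : Type*} [PseudoMetricSpace E] {u : ℕ → E} {v : ℕ → ℕ → E}
    (huv : TendstoUniformly v u atTop) (hv : ∀ m, CauchySeq (v m)) : CauchySeq u := by
  refine Metric.cauchySeq_iff.2 fun ε hε => ?_
  obtain ⟨m, hm⟩ := (Metric.tendstoUniformly_iff.1 huv (ε / 3) (by positivity)).exists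
  obtain ⟨N, hN⟩ := Metric.cauchySeq_iff.1 (hv m) (ε / 3) (by positivity)
  refine ⟨N, fun k hk l hl => ?_⟩
  calc dist (u k) (u l) ≤ dist (u k) (v m k) + dist (v m k) (v m l) + dist (v m l) (u l) :=
        dist_triangle4 _ _ _ _
    _ < ε / 3 + ε / 3 + ε / 3 := by
        gcongr
        exacts [hm k, hN k hk l hl, dist_comm (u l) _ ▸ hm l]
    _ = ε := by ring

lemma abs_mul_sub_mul_le {α₁ α₂ β₁ β₂ B M : ℝ} (hα₂ : |α₂| ≤ B) (hβ₁ : |β₁| ≤ M) :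
    |α₁ * α₂ - β₁ * β₂| ≤ B * |α₁ - β₁| + M * |α₂ - β₂| :=
  calc |α₁ * α₂ - β₁ * β₂| = |(α₁ - β₁) * α₂ + β₁ * (α₂ - β₂)| := by ring_nf
    _ ≤ |α₁ - β₁| * |α₂| + |β₁| * |α₂ - β₂| := (abs_add_le _ _).trans_eq (by rw [abs_mul, abs_mul])
    _ ≤ |α₁ - β₁| * B + M * |α₂ - β₂| := by gcongr
    _ = B * |α₁ - β₁| + M * |α₂ - β₂| := by ring

lemma integral_norm_le_toReal_eLpNorm {X E : Type*} [MeasurableSpace X] {μ : Measure X}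
    [IsProbabilityMeasure μ] [NormedAddCommGroup E] {f : X → E} {p : ENNReal} (hp : 1 ≤ p)
    (hf : MemLp f p μ) : ∫ x, ‖f x‖ ∂μ ≤ (eLpNorm f p μ).toReal := by
  rw [integral_norm_eq_lintegral_enorm hf.1, ← eLpNorm_one_eq_lintegral_enorm]
  exact ENNReal.toReal_mono hf.eLpNorm_ne_top (eLpNorm_le_eLpNorm_of_exponent_le hp hf.1)

lemma ae_abs_le_of_eLpNorm_top_le {X : Type*} [MeasurableSpace X] {μ : Measure X} {f : X → ℝ}
    {C : ℝ} (hC : 0 ≤ C) (hf : eLpNorm f ⊤ μ ≤ ENNReal.ofReal C) : ∀ᵐ y ∂μ, |f y| ≤ C := by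
  filter_upwards [ae_le_eLpNormEssSup (f := f) (μ := μ)] with y hy
  rw [Real.enorm_eq_ofReal_abs, ← eLpNorm_exponent_top] at hy
  exact (ENNReal.ofReal_le_ofReal_iff hC).1 (hy.trans hf)

section MaximalErgodic

variable {X : Type*} {S : X → X} {g : X → ℝ}

noncomputable def birkhoffMax (S : X → X) (g : X → ℝ) : ℕ → X → ℝ
  | 0 => 0
  | n + 1 => fun x => max (birkhoffMax S g n x) (birkhoffSum S g (n + 1) x)

lemma birkhoffMax_nonneg (n : ℕ) (x : X) : 0 ≤ birkhoffMax S g n x := by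
  induction n with
  | zero => rfl
  | succ n ih => exact ih.trans (le_max_left _ _)

lemma birkhoffMax_mono (x : X) : Monotone (birkhoffMax S g · x) :=
  monotone_nat_of_le_succ fun _ => le_max_left _ _

lemma birkhoffSum_le_birkhoffMax {k n : ℕ} (hkn : k ≤ n) (x : X) :
    birkhoffSum S g k x ≤ birkhoffMax S g n x := by
  induction n with
  | zero => simp [Nat.le_zero.1 hkn, birkhoffSum_zero, birkhoffMax]
  | succ n ih =>
    rcases hkn.lt_or_eq with hk | rfl
    · exact (ih (Nat.lt_succ_iff.1 hk)).trans (le_max_left _ _)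
    · exact le_max_right _ _

lemma birkhoffMax_succ (n : ℕ) (x : X) :
    birkhoffMax S g (n + 1) x = max 0 (g x + birkhoffMax S g n (S x)) := by
  induction n generalizing x with
  | zero => simp [birkhoffMax, birkhoffSum_one]
  | succ n ih =>
    change max (birkhoffMax S g (n + 1) x) (birkhoffSum S g (n + 2) x) = _
    rw [ih, birkhoffSum_succ', max_assoc, max_add_add_left]
    rfl

variable [MeasurableSpace X] {μ : Measure X}

lemma measurable_birkhoffMax (hS : Measurable S) (hg : Measurable g) (n : ℕ) :
    Measurable (birkhoffMax S g n) := by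
  induction n with
  | zero => exact measurable_const
  | succ n ih =>
    exact ih.max (Finset.measurable_sum _ fun i _ => hg.comp (hS.iterate i))

lemma integrable_birkhoffMax (hS : MeasurePreserving S μ μ) (hg : Integrable g μ) (n : ℕ) :
    Integrable (birkhoffMax S g n) μ := by
  induction n with
  | zero => exact integrable_zero _ _ _
  | succ n ih =>
    exact ih.sup (integrable_finsetSum _ fun i _ => (hS.iterate i).integrable_comp_of_integrable hg)

/-- Garsia's maximal ergodic lemma. -/
theorem setIntegral_birkhoffMax_pos_nonneg (hS : MeasurePreserving S μ μ) (hgm : Measurable g)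
    (hg : Integrable g μ) (n : ℕ) : 0 ≤ ∫ x in {x | 0 < birkhoffMax S g n x}, g x ∂μ := by
  set F := birkhoffMax S g n
  have hFm : Measurable F := measurable_birkhoffMax hS.measurable hgm n
  have hE : MeasurableSet {x | 0 < F x} := measurableSet_lt measurable_const hFm
  have hF := integrable_birkhoffMax hS hg n
  have hFS : Integrable (F ∘ S) μ := hS.integrable_comp_of_integrable hF
  -- On `{0 < F}` the recursion `F ≤ max 0 (g + F ∘ S)` loses its `0` branch.
  have hle : ∀ x ∈ {x | 0 < F x}, F x - F (S x) ≤ g x := fun x hx => by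
    have := (le_max_left _ _ : F x ≤ birkhoffMax S g (n + 1) x).trans_eq (birkhoffMax_succ n x)
    rcases le_max_iff.1 this with h | h
    · exact absurd hx (not_lt.2 h)
    · linarith
  have hFE : ∫ x in {x | 0 < F x}, F x ∂μ = ∫ x, F x ∂μ :=
    setIntegral_eq_integral_of_forall_compl_eq_zero fun x hx =>
      le_antisymm (not_lt.1 hx) (birkhoffMax_nonneg n x)
  have hFSE : ∫ x in {x | 0 < F x}, F (S x) ∂μ ≤ ∫ x, F (S x) ∂μ :=
    setIntegral_le_integral hFS (.of_forall fun x => birkhoffMax_nonneg n (S x))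
  have hFS_eq : ∫ x, F (S x) ∂μ = ∫ x, F x ∂μ := by
    rw [← integral_map hS.aemeasurable (hS.map_eq ▸ hFm.aestronglyMeasurable), hS.map_eq]
  calc (0 : ℝ) = ∫ x, F x ∂μ - ∫ x, F (S x) ∂μ := by rw [hFS_eq, sub_self]
    _ ≤ ∫ x in {x | 0 < F x}, F x ∂μ - ∫ x in {x | 0 < F x}, F (S x) ∂μ := by
      rw [hFE]; exact sub_le_sub_left hFSE _
    _ = ∫ x in {x | 0 < F x}, (F x - F (S x)) ∂μ :=
      (integral_sub hF.integrableOn hFS.integrableOn).symm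
    _ ≤ ∫ x in {x | 0 < F x}, g x ∂μ :=
      setIntegral_mono_on (hF.integrableOn.sub hFS.integrableOn) hg.integrableOn hE hle

lemma measure_exists_lt_birkhoffAverage_le_of_measurable [IsFiniteMeasure μ]
    (hS : MeasurePreserving S μ μ) (hgm : Measurable g) (hg : Integrable g μ) {lam : ℝ}
    (hlam : 0 < lam) :
    lam * μ.real {x | ∃ N, lam < birkhoffAverage ℝ S g N x} ≤ ∫ x, |g x| ∂μ := by
  set h : X → ℝ := g - fun _ => lam
  have hh : Integrable h μ := hg.sub (integrable_const lam)
  set E : ℕ → Set X := fun n => {x | 0 < birkhoffMax S h n x}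
  have hhm : Measurable h := hgm.sub measurable_const
  have hEm : ∀ n, MeasurableSet (E n) := fun n =>
    measurableSet_lt measurable_const (measurable_birkhoffMax hS.measurable hhm n)
  have hEmono : Monotone E := fun m n hmn x (hx : 0 < _) => hx.trans_le (birkhoffMax_mono x hmn)
  have hsub : {x | ∃ N, lam < birkhoffAverage ℝ S g N x} ⊆ ⋃ n, E n := by
    rintro x ⟨N, hN⟩
    have hN0 : 0 < (N : ℝ) := by
      rcases N.eq_zero_or_pos with rfl | hN0
      · simp only [birkhoffAverage_zero] at hN; linarith
      · exact_mod_cast hN0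
    have : 0 < birkhoffSum S h N x := by
      rw [birkhoffAverage, smul_eq_mul, inv_mul_eq_div, lt_div_iff₀ hN0] at hN
      have hconst : birkhoffSum S (fun _ => lam) N x = N * lam := by simp [birkhoffSum]
      rw [birkhoffSum_sub, hconst]
      linarith
    exact Set.mem_iUnion.2 ⟨N, this.trans_le (birkhoffSum_le_birkhoffMax le_rfl x)⟩
  have hEint : 0 ≤ ∫ x in ⋃ n, E n, h x ∂μ :=
    ge_of_tendsto (tendsto_setIntegral_of_monotone hEm hEmono hh.integrableOn)
      (.of_forall fun n => setIntegral_birkhoffMax_pos_nonneg hS hhm hh n)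
  rw [integral_sub' hg.integrableOn (integrable_const lam).integrableOn, setIntegral_const,
    smul_eq_mul] at hEint
  calc lam * μ.real {x | ∃ N, lam < birkhoffAverage ℝ S g N x}
      ≤ lam * μ.real (⋃ n, E n) := by gcongr; exact measure_ne_top _ _
    _ ≤ ∫ x in ⋃ n, E n, g x ∂μ := by linarith
    _ ≤ ∫ x, |g x| ∂μ :=
      (setIntegral_mono_on hg.integrableOn hg.abs.integrableOn (.iUnion hEm)
        fun x _ => le_abs_self _).trans
        (setIntegral_le_integral hg.abs (.of_forall fun x => abs_nonneg _))

theorem measure_exists_lt_birkhoffAverage_le [IsFiniteMeasure μ] (hS : MeasurePreserving S μ μ)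
    (hg : Integrable g μ) {lam : ℝ} (hlam : 0 < lam) :
    μ {x | ∃ N, lam < birkhoffAverage ℝ S g N x} ≤ ENNReal.ofReal ((∫ x, |g x| ∂μ) / lam) := by
  set g' := hg.1.mk g
  have hgg' : g =ᵐ[μ] g' := hg.1.ae_eq_mk
  have horbit : ∀ᵐ x ∂μ, ∀ N, birkhoffAverage ℝ S g N x = birkhoffAverage ℝ S g' N x := by
    filter_upwards [ae_all_iff.2 fun k => (hS.iterate k).quasiMeasurePreserving.ae hgg'] with x hx N
    simp only [birkhoffAverage, birkhoffSum, hx]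
  have hset : {x | ∃ N, lam < birkhoffAverage ℝ S g N x}
      =ᵐ[μ] {x | ∃ N, lam < birkhoffAverage ℝ S g' N x} := by
    refine eventuallyEq_set.2 ?_
    filter_upwards [horbit] with x hx
    simp only [hx]
  have hint : ∫ x, |g x| ∂μ = ∫ x, |g' x| ∂μ := integral_congr_ae (hgg'.fun_comp abs)
  rw [measure_congr hset, ← ofReal_measureReal, hint]
  refine ENNReal.ofReal_le_ofReal ((le_div_iff₀ hlam).2 ?_)
  rw [mul_comm]
  exact measure_exists_lt_birkhoffAverage_le_of_measurable hS hg.1.stronglyMeasurable_mk.measurable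
    (hg.congr hgg') hlam

end MaximalErgodic

theorem ae_eventually_forall_birkhoffAverage_abs_le {X : Type*} [MeasurableSpace X]
    {μ : Measure X} [IsProbabilityMeasure μ] {S : X → X} (hS : MeasurePreserving S μ μ)
    {g : ℕ → X → ℝ} (hg : ∀ m, AEStronglyMeasurable (g m) μ)
    (hg2 : ∀ m, eLpNorm (g m) 2 μ ≤ ENNReal.ofReal (4⁻¹ ^ m)) :
    ∀ᵐ x ∂μ, ∀ᶠ m in atTop, ∀ N, birkhoffAverage ℝ S (fun y => |g m y|) N x ≤ 2⁻¹ ^ m := by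
  have hL2 : ∀ m, MemLp (g m) 2 μ := fun m => ⟨hg m, (hg2 m).trans_lt ENNReal.ofReal_lt_top⟩
  have hL1 : ∀ m, ∫ y, |g m y| ∂μ ≤ 4⁻¹ ^ m := fun m => by
    simpa only [Real.norm_eq_abs] using (integral_norm_le_toReal_eLpNorm one_le_two (hL2 m)).trans
      (ENNReal.toReal_le_of_le_ofReal (by positivity) (hg2 m))
  have hmeas : ∀ m, μ {x | ∃ N, 2⁻¹ ^ m < birkhoffAverage ℝ S (fun y => |g m y|) N x}
      ≤ ENNReal.ofReal (2⁻¹ ^ m) := fun m =>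
    (measure_exists_lt_birkhoffAverage_le hS ((hL2 m).integrable one_le_two).abs
      (by positivity)).trans <| ENNReal.ofReal_le_ofReal <| by
        rw [div_le_iff₀ (by positivity), ← mul_pow, show (2⁻¹ * 2⁻¹ : ℝ) = 4⁻¹ by norm_num]
        simpa only [abs_abs] using hL1 m
  have hsum : ∑' m, μ {x | ∃ N, 2⁻¹ ^ m < birkhoffAverage ℝ S (fun y => |g m y|) N x} ≠ ⊤ :=
    ne_top_of_le_ne_top (by
      rw [← ENNReal.ofReal_tsum_of_nonneg (fun m => by positivity)
        (summable_geometric_of_lt_one (by norm_num) (by norm_num))]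
      exact ENNReal.ofReal_ne_top) (ENNReal.tsum_le_tsum hmeas)
  filter_upwards [ae_eventually_notMem hsum] with x hx
  filter_upwards [hx] with m hm
  simpa using hm

section Iterates

variable {X : Type*}

lemma iterZ_eq_coe_zpow (T : X ≃ X) (m : ℤ) : iterZ T m = ⇑(T ^ m) := rfl

lemma iterZ_mul_natCast (T : X ≃ X) (c : ℤ) (n : ℕ) : iterZ T (c * n) = (iterZ T c)^[n] := by
  rw [iterZ_eq_coe_zpow, iterZ_eq_coe_zpow, zpow_mul, zpow_natCast, Equiv.Perm.coe_pow]

lemma sum_Icc_iterZ_mul_eq_birkhoffSum {M : Type*} [AddCommMonoid M] (T : X ≃ X) (c : ℤ)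
    (h : X → M) (N : ℕ) (x : X) :
    ∑ n ∈ Icc 1 N, h (iterZ T (c * n) x) = birkhoffSum (iterZ T c) h N (iterZ T c x) := by
  rw [birkhoffSum, ← Finset.Ico_add_one_right_eq_Icc, sum_Ico_eq_sum_range, Nat.add_sub_cancel]
  refine sum_congr rfl fun k _ => ?_
  rw [iterZ_mul_natCast, add_comm, Function.iterate_succ_apply]

variable [MeasurableSpace X] {μ : Measure X}

lemma measurePreserving_iterZ {T : X ≃ᵐ X} (hT : MeasurePreserving T μ μ) (m : ℤ) :
    MeasurePreserving (iterZ T.toEquiv m) μ μ := by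
  rw [iterZ_eq_coe_zpow]
  cases m with
  | ofNat n => simpa [Equiv.Perm.coe_pow] using hT.iterate n
  | negSucc n =>
    simpa [zpow_negSucc, ← inv_pow, Equiv.Perm.coe_pow] using (hT.symm T).iterate (n + 1)

lemma ae_forall_iterZ_mul {T : X ≃ᵐ X} (hT : MeasurePreserving T μ μ) (c : ℤ) {P : X → Prop}
    (h : ∀ᵐ y ∂μ, P y) : ∀ᵐ x ∂μ, ∀ n : ℕ, P (iterZ T.toEquiv (c * n) x) :=
  ae_all_iff.2 fun n => (measurePreserving_iterZ hT (c * n)).quasiMeasurePreserving.ae h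

end Iterates

lemma norm_e (α : ℝ) : ‖e α‖ = 1 := by
  rw [e, Complex.norm_exp]
  simp

section Approximation

variable {X : Type*} (T : X ≃ X) (a b : ℤ) {f₁ f₂ : X → ℝ} (x : X) (p : Polynomial ℝ)

lemma norm_wAvg_sub_wAvg_le {g₁ g₂ : X → ℝ} {B M : ℝ}
    (hf₂ : ∀ n : ℕ, |f₂ (iterZ T (b * n) x)| ≤ B) (hg₁ : ∀ n : ℕ, |g₁ (iterZ T (a * n) x)| ≤ M)
    (N : ℕ) :
    ‖wAvg T a b f₁ f₂ x p N - wAvg T a b g₁ g₂ x p N‖ ≤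
      B * birkhoffAverage ℝ (iterZ T a) (fun y => |f₁ y - g₁ y|) N (iterZ T a x) +
        M * birkhoffAverage ℝ (iterZ T b) (fun y => |f₂ y - g₂ y|) N (iterZ T b x) := by
  have hterm : ∀ n ∈ Icc 1 N,
      ‖(f₁ (iterZ T (a * n) x) : ℂ) * f₂ (iterZ T (b * n) x) * e (p.eval (n : ℝ)) -
          g₁ (iterZ T (a * n) x) * g₂ (iterZ T (b * n) x) * e (p.eval (n : ℝ))‖ ≤
        B * |f₁ (iterZ T (a * n) x) - g₁ (iterZ T (a * n) x)| +
          M * |f₂ (iterZ T (b * n) x) - g₂ (iterZ T (b * n) x)| := fun n _ => by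
    rw [← sub_mul, norm_mul, norm_e, mul_one, ← Complex.ofReal_mul, ← Complex.ofReal_mul,
      ← Complex.ofReal_sub, Complex.norm_real, Real.norm_eq_abs]
    exact abs_mul_sub_mul_le (hf₂ n) (hg₁ n)
  rw [wAvg, wAvg, ← mul_sub, ← sum_sub_distrib, norm_mul, norm_inv, Complex.norm_natCast]
  calc (N : ℝ)⁻¹ * ‖∑ n ∈ Icc 1 N, _‖
      ≤ (N : ℝ)⁻¹ * ∑ n ∈ Icc 1 N, (B * |f₁ (iterZ T (a * n) x) - g₁ (iterZ T (a * n) x)| +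
          M * |f₂ (iterZ T (b * n) x) - g₂ (iterZ T (b * n) x)|) := by
        gcongr; exact norm_sum_le_of_le _ hterm
    _ = _ := by
        rw [sum_add_distrib, ← mul_sum, ← mul_sum,
          sum_Icc_iterZ_mul_eq_birkhoffSum T a (fun y => |f₁ y - g₁ y|),
          sum_Icc_iterZ_mul_eq_birkhoffSum T b (fun y => |f₂ y - g₂ y|)]
        simp only [birkhoffAverage, smul_eq_mul]
        ring

theorem exists_tendsto_wAvg_of_approx {g₁ g₂ : ℕ → X → ℝ} {B M : ℝ} {δ : ℕ → ℝ}
    (hδ : Tendsto δ atTop (nhds 0))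
    (hf₂ : ∀ n : ℕ, |f₂ (iterZ T (b * n) x)| ≤ B)
    (hg₁ : ∀ m (n : ℕ), |g₁ m (iterZ T (a * n) x)| ≤ M)
    (h₁ : ∀ᶠ m in atTop, ∀ N,
      birkhoffAverage ℝ (iterZ T a) (fun y => |f₁ y - g₁ m y|) N (iterZ T a x) ≤ δ m)
    (h₂ : ∀ᶠ m in atTop, ∀ N,
      birkhoffAverage ℝ (iterZ T b) (fun y => |f₂ y - g₂ m y|) N (iterZ T b x) ≤ δ m)
    (hg : ∀ m, ∃ L, Tendsto (wAvg T a b (g₁ m) (g₂ m) x p) atTop (nhds L)) :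
    ∃ L, Tendsto (wAvg T a b f₁ f₂ x p) atTop (nhds L) := by
  have hB : 0 ≤ B := (abs_nonneg _).trans (hf₂ 0)
  have hM : 0 ≤ M := (abs_nonneg _).trans (hg₁ 0 0)
  have huniform : TendstoUniformly (fun m => wAvg T a b (g₁ m) (g₂ m) x p)
      (wAvg T a b f₁ f₂ x p) atTop := by
    refine Metric.tendstoUniformly_iff.2 fun ε hε => ?_
    have hδε : ∀ᶠ m in atTop, (B + M) * δ m < ε := by
      have := hδ.const_mul (B + M)
      rw [mul_zero] at this
      exact this.eventually (gt_mem_nhds hε)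
    filter_upwards [h₁, h₂, hδε] with m hm₁ hm₂ hmε N
    rw [dist_eq_norm]
    calc _ ≤ _ := norm_wAvg_sub_wAvg_le T a b x p hf₂ (hg₁ m) N
      _ ≤ B * δ m + M * δ m := by gcongr; exacts [hm₁ N, hm₂ N]
      _ < ε := by linarith
  exact cauchySeq_tendsto_of_complete
    (huniform.cauchySeq fun m => (hg m).choose_spec.cauchySeq)

end Approximation

theorem approximation_polynomial_wiener_wintner_double_recurrence_general
    {X : Type*} [MeasurableSpace X] (μ : Measure X) [IsProbabilityMeasure μ]
    (T : X ≃ᵐ X) (hT : MeasurePreserving T μ μ)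
    (a b : ℤ)
    (f₁ f₂ : X → ℝ) (hf₁ : MemLp f₁ ⊤ μ) (hf₂ : MemLp f₂ ⊤ μ)
    (f₁' f₂' : ℕ → X → ℝ)
    (hf₁' : ∀ i, MemLp (f₁' i) ⊤ μ) (hf₂' : ∀ i, MemLp (f₂' i) ⊤ μ)
    (M : ℝ) (hM : 0 < M)
    (hMbound : ∀ i, eLpNorm (f₁' i) ⊤ μ < ENNReal.ofReal M)
    (hconv₁ : Tendsto (fun i => eLpNorm (f₁' i - f₁) 2 μ) atTop (nhds 0))
    (hconv₂ : Tendsto (fun i => eLpNorm (f₂' i - f₂) 2 μ) atTop (nhds 0))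
    (hXi : ∀ i, ∃ Xi : Set X, μ Xiᶜ = 0 ∧ ∀ x ∈ Xi, ∀ k : ℕ, 0 < k →
      ∀ p : Polynomial ℝ, p.natDegree ≤ k →
        ∃ L : ℂ, Tendsto (fun N : ℕ => wAvg T.toEquiv a b (f₁' i) (f₂' i) x p N)
          atTop (nhds L)) :
    ∃ Xinf : Set X, μ Xinfᶜ = 0 ∧ ∀ x ∈ Xinf, ∀ p : Polynomial ℝ,
      ∃ L : ℂ, Tendsto (fun N : ℕ => wAvg T.toEquiv a b f₁ f₂ x p N) atTop (nhds L) := by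
  have hfast : ∀ m, ∀ᶠ i in atTop, eLpNorm (f₁ - f₁' i) 2 μ ≤ ENNReal.ofReal (4⁻¹ ^ m) ∧
      eLpNorm (f₂ - f₂' i) 2 μ ≤ ENNReal.ofReal (4⁻¹ ^ m) := fun m => by
    have hpos : 0 < ENNReal.ofReal (4⁻¹ ^ m) := ENNReal.ofReal_pos.2 (by positivity)
    simp only [eLpNorm_sub_comm f₁, eLpNorm_sub_comm f₂]
    exact ((hconv₁.eventually (ge_mem_nhds hpos)).and (hconv₂.eventually (ge_mem_nhds hpos)))
  choose φ hφ using fun m => (hfast m).exists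
  choose Xi hXi_null hXi_conv using hXi
  have hconv : ∀ᵐ x ∂μ, ∀ p : Polynomial ℝ,
      ∃ L : ℂ, Tendsto (fun N : ℕ => wAvg T.toEquiv a b f₁ f₂ x p N) atTop (nhds L) := by
    filter_upwards [ae_all_iff.2 fun m => mem_ae_iff.2 (hXi_null (φ m)),
      ae_forall_iterZ_mul hT b (ae_abs_le_of_eLpNorm_top_le ENNReal.toReal_nonneg
        (ENNReal.ofReal_toReal hf₂.2.ne).ge),
      ae_all_iff.2 fun m => ae_forall_iterZ_mul hT a
        (ae_abs_le_of_eLpNorm_top_le hM.le (hMbound (φ m)).le),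
      (measurePreserving_iterZ hT a).quasiMeasurePreserving.ae
        (ae_eventually_forall_birkhoffAverage_abs_le (measurePreserving_iterZ hT a)
          (fun m => hf₁.1.sub (hf₁' (φ m)).1) fun m => (hφ m).1),
      (measurePreserving_iterZ hT b).quasiMeasurePreserving.ae
        (ae_eventually_forall_birkhoffAverage_abs_le (measurePreserving_iterZ hT b)
          (fun m => hf₂.1.sub (hf₂' (φ m)).1) fun m => (hφ m).2)]
      with x hxXi hf₂x hf₁'x h₁ h₂ p
    exact exists_tendsto_wAvg_of_approx T.toEquiv a b x p
      (tendsto_pow_atTop_nhds_zero_of_lt_one (by norm_num) (by norm_num)) hf₂x hf₁'x h₁ h₂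
      fun m => hXi_conv (φ m) x (hxXi m) _ p.natDegree.succ_pos p p.natDegree.le_succ
  exact ⟨_, mem_ae_iff.1 hconv, fun x hx => hx⟩

/-- Approximation lemma: let `(X, μ, T)` be an invertible measure-preserving system on a
probability space, `a ≠ b` integers, and `f₁ f₂ ∈ L^∞(μ)`. Suppose `(f₁ⁱ)` and `(f₂ⁱ)` are
sequences in `L^∞(μ)` with `‖f₁ⁱ‖_∞ < M` for all `i`, `fⱼⁱ → fⱼ` in `L²(μ)` for `j = 1, 2`,
and for each `i` there is a full-measure set `Xᵢ` such that for every `x ∈ Xᵢ` and every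
real polynomial `p` the averages `(1/N) ∑_{n=1}^N f₁ⁱ(T^{an}x) f₂ⁱ(T^{bn}x) e(p(n))`
converge. Then there is a full-measure set `X∞` such that for every `x ∈ X∞` and every
real polynomial `p` the averages `(1/N) ∑_{n=1}^N f₁(T^{an}x) f₂(T^{bn}x) e(p(n))`
converge. -/
theorem approximation_polynomial_wiener_wintner_double_recurrence
    {X : Type*} [MeasurableSpace X] (μ : Measure X) [IsProbabilityMeasure μ]
    (T : X ≃ᵐ X) (hT : MeasurePreserving T μ μ)
    (a b : ℤ) (hab : a ≠ b)
    (f₁ f₂ : X → ℝ) (hf₁ : MemLp f₁ ⊤ μ) (hf₂ : MemLp f₂ ⊤ μ)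
    (f₁' f₂' : ℕ → X → ℝ)
    (hf₁' : ∀ i, MemLp (f₁' i) ⊤ μ) (hf₂' : ∀ i, MemLp (f₂' i) ⊤ μ)
    (M : ℝ) (hM : 0 < M)
    (hMbound : ∀ i, eLpNorm (f₁' i) ⊤ μ < ENNReal.ofReal M)
    (hconv₁ : Tendsto (fun i => eLpNorm (f₁' i - f₁) 2 μ) atTop (nhds 0))
    (hconv₂ : Tendsto (fun i => eLpNorm (f₂' i - f₂) 2 μ) atTop (nhds 0))
    (hXi : ∀ i, ∃ Xi : Set X, μ Xiᶜ = 0 ∧ ∀ x ∈ Xi, ∀ k : ℕ, 0 < k →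
      ∀ p : Polynomial ℝ, p.natDegree ≤ k →
        ∃ L : ℂ, Tendsto (fun N : ℕ => wAvg T.toEquiv a b (f₁' i) (f₂' i) x p N)
          atTop (nhds L)) :
    ∃ Xinf : Set X, μ Xinfᶜ = 0 ∧ ∀ x ∈ Xinf, ∀ p : Polynomial ℝ,
      ∃ L : ℂ, Tendsto (fun N : ℕ => wAvg T.toEquiv a b f₁ f₂ x p N) atTop (nhds L) :=
  approximation_polynomial_wiener_wintner_double_recurrence_general μ T hT a b f₁ f₂ hf₁ hf₂ f₁' f₂'
    hf₁' hf₂' M hM hMbound hconv₁ hconv₂ hXi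
end

section
/- Let $(a_n)_{n=0}^{N-1}$ be a finite sequence of complex numbers and let $H$ be an integer with $0 \leq H \leq N-1$. Then $\left| \frac{1}{N} \sum_{n=0}^{N-1} a_n \right|^2 \leq \frac{N+H}{N^2(H+1)} \sum_{n=0}^{N-1} |a_n|^2 + \frac{2(N+H)}{N^2(H+1)^2} \sum_{h=1}^{H} (H+1-h) \, \mathrm{Re}\left( \sum_{n=0}^{N-h-1} a_n \overline{a_{n+h}} \right)$. -/
/-!
Extend the sequence by zero to `b : ℤ → E`. Each of the `H + 1` shifts `n ↦ b (n + h)`,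
`0 ≤ h ≤ H`, has the same sum and is supported in the window `[-H, N)` of length `N + H`, so
`(H + 1) ∑ b = ∑_{n ∈ [-H, N)} ∑_{h ≤ H} b (n + h)`, and Cauchy–Schwarz over the window bounds the
square of this by `(N + H) ∑_n ‖∑_h b (n + h)‖²`. Expanding the square gives `∑_{h, h'} R (h - h')`
with `R` the autocorrelation of `b`; as `R` is even, grouping the pairs by `d = |h - h'|` (there
are `2 (H + 1 - d)` of them when `d ≥ 1`) yields the right-hand side. Only the real inner
product enters, and on `ℂ` it is `⟪z, w⟫_ℝ = Re (w * conj z)`.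
-/

open Finset Function

open scoped RealInnerProductSpace

theorem finsum_eq_sum_comp_add {G M : Type*} [AddGroup G] [AddCommMonoid M] {g : G → M}
    {t : Finset G} (k : G) (hg : support (fun n => g (n + k)) ⊆ t) :
    ∑ᶠ m, g m = ∑ n ∈ t, g (n + k) := by
  rw [← finsum_eq_finsetSum_of_support_subset _ hg]
  exact (finsum_comp_equiv (Equiv.addRight k)).symm

theorem norm_sum_sq_le_card_mul {ι E : Type*} [SeminormedAddCommGroup E] (s : Finset ι)
    (x : ι → E) : ‖∑ i ∈ s, x i‖ ^ 2 ≤ #s * ∑ i ∈ s, ‖x i‖ ^ 2 :=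
  (pow_le_pow_left₀ (norm_nonneg _) (norm_sum_le s x) 2).trans (sq_sum_le_card_mul_sum_sq ..)

theorem Finset.sum_range_natCast_sub_eq_sum_Icc {M : Type*} [AddCommMonoid M] (f : ℤ → M)
    (n : ℕ) : ∑ h ∈ range n, f (n - h) = ∑ d ∈ Icc 1 n, f d := by
  refine sum_nbij' (fun h => n - h) (fun d => n - d) ?_ ?_ ?_ ?_ ?_ <;>
    intro h hh <;> simp only [mem_range, mem_Icc] at hh ⊢
  all_goals first | omega | (congr 1; omega)

theorem Finset.sum_range_sum_range_sub_of_even {R : Type*} [CommRing R] (ψ : ℤ → R)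
    (hψ : ψ.Even) (H : ℕ) :
    ∑ h ∈ range (H + 1), ∑ h' ∈ range (H + 1), ψ (h - h') =
      (H + 1) * ψ 0 + 2 * ∑ d ∈ Icc 1 H, ((H : R) + 1 - d) * ψ d := by
  induction H with
  | zero => simp
  | succ H ih =>
    have hcolumn : ∑ h ∈ range (H + 1), ψ (h - (H + 1 : ℕ)) = ∑ d ∈ Icc 1 (H + 1), ψ d := by
      rw [← sum_range_natCast_sub_eq_sum_Icc]
      exact sum_congr rfl fun h _ => by rw [← hψ, neg_sub]
    simp only [sum_range_succ (n := H + 1), sum_add_distrib, ih, hcolumn,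
      sum_range_natCast_sub_eq_sum_Icc, sub_self, sum_Icc_succ_top (Nat.le_add_left 1 H)]
    push_cast
    have hweights : ∑ d ∈ Icc 1 H, ((H : R) + 1 + 1 - d) * ψ d =
        ∑ d ∈ Icc 1 H, ((H : R) + 1 - d) * ψ d + ∑ d ∈ Icc 1 H, ψ d := by
      rw [← sum_add_distrib]
      exact sum_congr rfl fun _ _ => by ring
    rw [hweights]
    ring

theorem support_comp_add_subset_Ico {M : Type*} [Zero M] {f : ℤ → M} {N H k : ℕ}
    (hf : support f ⊆ Set.Ico 0 N) (hk : k ≤ H) :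
    support (fun n => f (n + k)) ⊆ Ico (-H : ℤ) N := by
  intro n hn
  have := hf hn
  simp only [Set.mem_Ico, coe_Ico] at this ⊢
  omega

theorem sum_Ico_sum_range_comp_add {M : Type*} [AddCommMonoid M] {b : ℤ → M} {N : ℕ}
    (hb : support b ⊆ Set.Ico 0 N) (H : ℕ) :
    ∑ n ∈ Ico (-H : ℤ) N, ∑ h ∈ range (H + 1), b (n + h) = (H + 1) • ∑ᶠ m, b m := by
  rw [sum_comm, sum_eq_card_nsmul fun h hh =>
    (finsum_eq_sum_comp_add _ (support_comp_add_subset_Ico hb (mem_range_succ_iff.mp hh))).symm,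
    card_range]

theorem finsum_indicator_Ico_toNat {M : Type*} [AddCommMonoid M] (f : ℕ → M) (N : ℕ) :
    ∑ᶠ m, (Set.Ico 0 (N : ℤ)).indicator (fun m => f m.toNat) m = ∑ n ∈ range N, f n := by
  rw [finsum_eq_finsetSum_of_support_subset _ (s := (range N).map Nat.castEmbedding), sum_map]
  · refine sum_congr rfl fun n hn => ?_
    rw [Set.indicator_of_mem (by simpa using hn)]
    simp
  · intro m hm
    have := Set.support_indicator_subset hm
    simp only [Set.mem_Ico, coe_map, Set.mem_image, coe_range, Set.mem_Iio,
      Nat.castEmbedding_apply] at this ⊢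
    exact ⟨m.toNat, by omega, by omega⟩

variable {E : Type*} [NormedAddCommGroup E] [InnerProductSpace ℝ E]

theorem norm_sum_sq_eq_sum_sum_inner {ι : Type*} (s : Finset ι) (x : ι → E) :
    ‖∑ i ∈ s, x i‖ ^ 2 = ∑ i ∈ s, ∑ j ∈ s, ⟪x i, x j⟫ := by
  simp_rw [← real_inner_self_eq_norm_sq, sum_inner, inner_sum]

/-- Meaningful for finitely supported `b`; otherwise the `finsum` is `0`. -/
noncomputable def autocorrelation (b : ℤ → E) (d : ℤ) : ℝ := ∑ᶠ m, ⟪b (m + d), b m⟫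

theorem autocorrelation_even (b : ℤ → E) : (autocorrelation b).Even := by
  intro d
  rw [autocorrelation, autocorrelation, ← finsum_comp_equiv (Equiv.addRight d)]
  simp [real_inner_comm]

theorem sum_Ico_norm_sum_range_comp_add_sq {b : ℤ → E} {N : ℕ}
    (hb : support b ⊆ Set.Ico 0 N) (H : ℕ) :
    ∑ n ∈ Ico (-H : ℤ) N, ‖∑ h ∈ range (H + 1), b (n + h)‖ ^ 2 =
      ∑ h ∈ range (H + 1), ∑ h' ∈ range (H + 1), autocorrelation b (h - h') := by
  simp_rw [norm_sum_sq_eq_sum_sum_inner]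
  rw [sum_comm]
  refine sum_congr rfl fun h _ => ?_
  rw [sum_comm]
  refine sum_congr rfl fun h' hh' => ?_
  have hsupp : support (fun m => ⟪b (m + (h - h')), b m⟫) ⊆ Set.Ico 0 N := fun m hm =>
    hb fun hbm => hm (by simp [hbm])
  rw [autocorrelation, finsum_eq_sum_comp_add _
    (support_comp_add_subset_Ico hsupp (mem_range_succ_iff.mp hh'))]
  simp

theorem sq_mul_norm_finsum_le_autocorrelation {b : ℤ → E} {N : ℕ}
    (hb : support b ⊆ Set.Ico 0 N) (H : ℕ) :
    (((H : ℝ) + 1) * ‖∑ᶠ m, b m‖) ^ 2 ≤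
      ((N : ℝ) + H) * (((H : ℝ) + 1) * autocorrelation b 0 +
        2 * ∑ d ∈ Icc 1 H, ((H : ℝ) + 1 - d) * autocorrelation b d) := by
  rw [← sum_range_sum_range_sub_of_even _ (autocorrelation_even b) H,
    ← sum_Ico_norm_sum_range_comp_add_sq hb H]
  have hcard : #(Ico (-H : ℤ) N) = N + H := by
    rw [Int.card_Ico]
    omega
  have hwindow : ((H : ℝ) + 1) * ‖∑ᶠ m, b m‖ =
      ‖∑ n ∈ Ico (-H : ℤ) N, ∑ h ∈ range (H + 1), b (n + h)‖ := by
    rw [sum_Ico_sum_range_comp_add hb, RCLike.norm_nsmul ℝ, nsmul_eq_mul]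
    push_cast
    ring
  rw [hwindow]
  convert norm_sum_sq_le_card_mul _ _ using 2
  rw [hcard]
  push_cast
  ring

theorem autocorrelation_indicator_Ico_toNat (a : ℕ → E) (N d : ℕ) :
    autocorrelation ((Set.Ico 0 (N : ℤ)).indicator (fun m => a m.toNat)) d =
      ∑ n ∈ range (N - d), ⟪a (n + d), a n⟫ := by
  rw [autocorrelation, ← finsum_indicator_Ico_toNat]
  congr 1 with m
  simp only [Set.indicator_apply, Set.mem_Ico]
  split_ifs <;> first | omega | (congr 2; omega) | simp

theorem sq_mul_norm_sum_range_le (a : ℕ → E) (N H : ℕ) :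
    (((H : ℝ) + 1) * ‖∑ n ∈ range N, a n‖) ^ 2 ≤
      ((N : ℝ) + H) * (((H : ℝ) + 1) * ∑ n ∈ range N, ‖a n‖ ^ 2 +
        2 * ∑ d ∈ Icc 1 H, ((H : ℝ) + 1 - d) * ∑ n ∈ range (N - d), ⟪a (n + d), a n⟫) := by
  have key := sq_mul_norm_finsum_le_autocorrelation
    (Set.support_indicator_subset (s := Set.Ico 0 (N : ℤ)) (f := fun m => a m.toNat)) H
  have hzero := autocorrelation_indicator_Ico_toNat a N 0
  simp only [Nat.cast_zero, Nat.sub_zero, add_zero, real_inner_self_eq_norm_sq] at hzero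
  simpa only [finsum_indicator_Ico_toNat, hzero, autocorrelation_indicator_Ico_toNat] using key

theorem van_der_corput_inequality_general
    (N H : ℕ) (a : ℕ → ℂ) :
    ‖(N : ℂ)⁻¹ * ∑ n ∈ Finset.range N, a n‖ ^ 2 ≤
      ((N : ℝ) + H) / ((N : ℝ) ^ 2 * ((H : ℝ) + 1)) *
          ∑ n ∈ Finset.range N, ‖a n‖ ^ 2
        + 2 * ((N : ℝ) + H) / ((N : ℝ) ^ 2 * ((H : ℝ) + 1) ^ 2) *
            ∑ h ∈ Finset.Icc 1 H, ((H : ℝ) + 1 - (h : ℝ)) *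
              (∑ n ∈ Finset.range (N - h), a n * (starRingEnd ℂ) (a (n + h))).re := by
  have key := sq_mul_norm_sum_range_le a N H
  simp only [Complex.inner, ← Complex.re_sum] at key
  rcases N.eq_zero_or_pos with rfl | hN
  · simp
  rw [← div_le_div_iff_of_pos_right (by positivity : (0 : ℝ) < (N * (H + 1)) ^ 2)] at key
  rw [norm_mul, norm_inv, Complex.norm_natCast]
  have hN' : (N : ℝ) ≠ 0 := by positivity
  refine (Eq.trans_le ?_ key).trans_eq ?_ <;> field_simp

/-- van der Corput's inequality: for complex numbers `a₀, …, a_{N-1}` and an integer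
`H` with `0 ≤ H ≤ N - 1`,
`|(1/N) ∑_{n=0}^{N-1} aₙ|² ≤ (N+H)/(N²(H+1)) ∑_{n=0}^{N-1} |aₙ|²
  + 2(N+H)/(N²(H+1)²) ∑_{h=1}^{H} (H+1-h) Re(∑_{n=0}^{N-h-1} aₙ conj(a_{n+h}))`. -/
theorem van_der_corput_inequality
    (N H : ℕ) (hN : 1 ≤ N) (hH : H ≤ N - 1) (a : ℕ → ℂ) :
    ‖(N : ℂ)⁻¹ * ∑ n ∈ Finset.range N, a n‖ ^ 2 ≤
      ((N : ℝ) + H) / ((N : ℝ) ^ 2 * ((H : ℝ) + 1)) *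
          ∑ n ∈ Finset.range N, ‖a n‖ ^ 2
        + 2 * ((N : ℝ) + H) / ((N : ℝ) ^ 2 * ((H : ℝ) + 1) ^ 2) *
            ∑ h ∈ Finset.Icc 1 H, ((H : ℝ) + 1 - (h : ℝ)) *
              (∑ n ∈ Finset.range (N - h), a n * (starRingEnd ℂ) (a (n + h))).re :=
  van_der_corput_inequality_general N H a
end
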